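/- arXiv:2106.04096 — 2 statements merged into one kernel-verified Lean document; each statement's English description precedes it below -/
import Mathlib

section
/- (Performance difference lemma, entropy-regularized) For any two policies π, π' with full support, V_λ^π(s_0) - V_λ^{π'}(s_0) = (1/(1-γ)) ∑_{s,a} d_{s_0}^π(s) π(a|s) [A_λ^{π'}(s,a) + λ log(π'(a|s)/π(a|s))], where A_λ^{π'}(s,a) = Q_λ^{π'}(s,a) - V_λ^{π'}(s) - λ log π'(a|s). -/
open scoped BigOperators

/-- State-to-state transition kernel induced by a policy. -/
noncomputable def policyKernel {S A : Type*} [Fintype S] [DecidableEq S] [Fintype A]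
    (P : S → A → S → ℝ) (π : A → S → ℝ) : Matrix S S ℝ :=
  fun s s' => ∑ a, π a s * P s a s'

/-- Discounted state visitation distribution started from `s₀`:
`d_{s₀}^π(s) = (1-γ) ∑_{t≥0} γ^t Pr_π(s_t = s | s₀)`. -/
noncomputable def visitation {S A : Type*} [Fintype S] [DecidableEq S] [Fintype A]
    (γ : ℝ) (P : S → A → S → ℝ) (π : A → S → ℝ) (s₀ s : S) : ℝ :=
  (1 - γ) * ∑' t : ℕ, γ ^ t * (policyKernel P π ^ t) s₀ s

/-- Powers of a row-stochastic matrix are row-stochastic. -/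
lemma stochPow {S : Type*} [Fintype S] [DecidableEq S] (K : Matrix S S ℝ)
    (h0 : ∀ s s', 0 ≤ K s s') (h1 : ∀ s, ∑ s', K s s' = 1) (n : ℕ) :
    (∀ s s', 0 ≤ (K ^ n) s s') ∧ (∀ s, ∑ s', (K ^ n) s s' = 1) := by
  induction n with
  | zero =>
    refine ⟨fun s s' => ?_, fun s => ?_⟩
    · rw [pow_zero]
      by_cases h : s = s' <;> simp [Matrix.one_apply, h]
    · simp [Matrix.one_apply]
  | succ n ih =>
    rw [pow_succ]
    refine ⟨fun s s' => ?_, fun s => ?_⟩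
    · rw [Matrix.mul_apply]
      exact Finset.sum_nonneg fun u _ => mul_nonneg (ih.1 s u) (h0 u s')
    · simp only [Matrix.mul_apply]
      rw [Finset.sum_comm]
      calc ∑ u, ∑ s', (K ^ n) s u * K u s'
          = ∑ u, (K ^ n) s u * ∑ s', K u s' := by
            simp [Finset.mul_sum]
        _ = 1 := by simp [h1, ih.2 s]

/-- Entropy-regularized performance difference lemma. -/
theorem performance_difference {S A : Type*} [Fintype S] [DecidableEq S] [Fintype A]
    (γ : ℝ) (hγ : 0 < γ) (hγ1 : γ < 1)
    (lam : ℝ) (hlam : 0 < lam)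
    (r : S → A → ℝ)
    (P : S → A → S → ℝ) (hP : ∀ s a s', 0 ≤ P s a s') (hPsum : ∀ s a, ∑ s', P s a s' = 1)
    (π π' : A → S → ℝ)
    (hπ : ∀ a s, 0 < π a s) (hπsum : ∀ s, ∑ a, π a s = 1)
    (hπ' : ∀ a s, 0 < π' a s) (hπ'sum : ∀ s, ∑ a, π' a s = 1)
    (V V' : S → ℝ)
    (hV : ∀ s, V s =
      ∑ a, π a s * (r s a - lam * Real.log (π a s) + γ * ∑ s', P s a s' * V s'))
    (hV' : ∀ s, V' s =
      ∑ a, π' a s * (r s a - lam * Real.log (π' a s) + γ * ∑ s', P s a s' * V' s'))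
    (s₀ : S) :
    V s₀ - V' s₀ = (1 / (1 - γ)) *
      ∑ s, ∑ a, visitation γ P π s₀ s * π a s *
        (((r s a + γ * ∑ s', P s a s' * V' s') - V' s - lam * Real.log (π' a s))
          + lam * Real.log (π' a s / π a s)) := by
  have hγ1' : (1 : ℝ) - γ ≠ 0 := by linarith
  set K : Matrix S S ℝ := policyKernel P π with hKdef
  have hK0 : ∀ s s', 0 ≤ K s s' := fun s s' =>
    Finset.sum_nonneg fun a _ => mul_nonneg (hπ a s).le (hP s a s')
  have hK1 : ∀ s, ∑ s', K s s' = 1 := by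
    intro s
    simp only [hKdef, policyKernel]
    rw [Finset.sum_comm]
    calc ∑ a, ∑ s', π a s * P s a s'
        = ∑ a, π a s * ∑ s', P s a s' := by simp [Finset.mul_sum]
      _ = 1 := by simp [hPsum, hπsum s]
  have hKpow := stochPow K hK0 hK1
  have hent : ∀ (t : ℕ) (s s' : S), (K ^ t) s s' ≤ 1 := by
    intro t s s'
    calc (K ^ t) s s' ≤ ∑ u, (K ^ t) s u :=
          Finset.single_le_sum (fun u _ => (hKpow t).1 s u) (Finset.mem_univ s')
      _ = 1 := (hKpow t).2 s
  -- swap lemma for the kernel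
  have hswap : ∀ (s : S) (x : S → ℝ),
      ∑ s', K s s' * x s' = ∑ a, π a s * ∑ s', P s a s' * x s' := by
    intro s x
    simp only [hKdef, policyKernel, Finset.sum_mul]
    rw [Finset.sum_comm]
    simp [Finset.mul_sum, mul_assoc]
  set w : S → ℝ := fun s => V s - V' s with hwdef
  set f : S → ℝ := fun s => ∑ a, π a s *
        (((r s a + γ * ∑ s', P s a s' * V' s') - V' s - lam * Real.log (π' a s))
          + lam * Real.log (π' a s / π a s)) with hfdef
  -- key pointwise identity
  have key : ∀ s, f s = w s - γ * ∑ s', K s s' * w s' := by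
    intro s
    have h1 : f s = (∑ a, π a s * (r s a - lam * Real.log (π a s)
        + γ * ∑ s', P s a s' * V' s')) - V' s := by
      have hpt : ∀ a ∈ Finset.univ, π a s *
          (((r s a + γ * ∑ s', P s a s' * V' s') - V' s - lam * Real.log (π' a s))
            + lam * Real.log (π' a s / π a s))
          = π a s * (r s a - lam * Real.log (π a s) + γ * ∑ s', P s a s' * V' s')
            - π a s * V' s := by
        intro a _
        rw [Real.log_div (hπ' a s).ne' (hπ a s).ne']
        ring
      have h1a : f s = ∑ a, (π a s * (r s a - lam * Real.log (π a s)
          + γ * ∑ s', P s a s' * V' s') - π a s * V' s) := Finset.sum_congr rfl hpt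
      rw [h1a, Finset.sum_sub_distrib, ← Finset.sum_mul, hπsum s, one_mul]
    have h2 : (∑ a, π a s * (r s a - lam * Real.log (π a s)
        + γ * ∑ s', P s a s' * V' s'))
        = (∑ a, π a s * (r s a - lam * Real.log (π a s)
        + γ * ∑ s', P s a s' * V s'))
        + γ * ∑ a, π a s * ∑ s', P s a s' * (V' s' - V s') := by
      rw [Finset.mul_sum, ← Finset.sum_add_distrib]
      apply Finset.sum_congr rfl
      intro a _
      have hsub : ∑ s', P s a s' * (V' s' - V s')
          = (∑ s', P s a s' * V' s') - ∑ s', P s a s' * V s' := by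
        rw [← Finset.sum_sub_distrib]
        apply Finset.sum_congr rfl
        intro s' _
        ring
      rw [hsub]
      ring
    rw [h1, h2, ← hV s, ← hswap s (fun s' => V' s' - V s')]
    have : ∑ s', K s s' * (V' s' - V s') = - ∑ s', K s s' * w s' := by
      rw [← Finset.sum_neg_distrib]
      apply Finset.sum_congr rfl
      intro s' _
      simp only [hwdef]
      ring
    rw [this]
    simp only [hwdef]
    ring
  -- summability of the visitation series terms
  have hsumc : ∀ (c : ℝ) (s : S), Summable (fun t : ℕ => γ ^ t * (K ^ t) s₀ s * c) := by
    intro c s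
    apply Summable.of_abs
    refine Summable.of_nonneg_of_le (fun t => abs_nonneg _) (fun t => ?_)
      ((summable_geometric_of_lt_one hγ.le hγ1).mul_right |c|)
    rw [abs_mul, abs_mul, abs_pow, abs_of_nonneg hγ.le,
      abs_of_nonneg ((hKpow t).1 s₀ s)]
    calc γ ^ t * (K ^ t) s₀ s * |c| ≤ γ ^ t * 1 * |c| := by
          gcongr
          exact hent t s₀ s
      _ = γ ^ t * |c| := by ring
  set g : ℕ → ℝ := fun t => γ ^ t * ∑ s, (K ^ t) s₀ s * w s with hgdef
  have hg : Summable g := by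
    apply Summable.of_abs
    refine Summable.of_nonneg_of_le (fun t => abs_nonneg _) (fun t => ?_)
      ((summable_geometric_of_lt_one hγ.le hγ1).mul_right (∑ s, |w s|))
    rw [hgdef]
    rw [abs_mul, abs_pow, abs_of_nonneg hγ.le]
    have hb : |∑ s, (K ^ t) s₀ s * w s| ≤ ∑ s, |w s| := by
      calc |∑ s, (K ^ t) s₀ s * w s| ≤ ∑ s, |(K ^ t) s₀ s * w s| :=
            Finset.abs_sum_le_sum_abs _ _
        _ ≤ ∑ s, |w s| := by
            apply Finset.sum_le_sum
            intro s _
            rw [abs_mul, abs_of_nonneg ((hKpow t).1 s₀ s)]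
            exact mul_le_of_le_one_left (abs_nonneg _) (hent t s₀ s)
    exact mul_le_mul_of_nonneg_left hb (pow_nonneg hγ.le t)
  have hg1 : Summable (fun t => g (t + 1)) := (summable_nat_add_iff 1).2 hg
  -- telescoping identity per time step
  have hGt : ∀ t : ℕ, (∑ s, γ ^ t * (K ^ t) s₀ s * f s) = g t - g (t + 1) := by
    intro t
    have hstep : ∑ s', (K ^ (t + 1)) s₀ s' * w s'
        = ∑ s, (K ^ t) s₀ s * ∑ s', K s s' * w s' := by
      simp only [pow_succ, Matrix.mul_apply, Finset.sum_mul]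
      rw [Finset.sum_comm]
      simp [Finset.mul_sum, mul_assoc]
    calc ∑ s, γ ^ t * (K ^ t) s₀ s * f s
        = (γ ^ t * ∑ s, (K ^ t) s₀ s * w s)
          - γ ^ (t + 1) * ∑ s, (K ^ t) s₀ s * ∑ s', K s s' * w s' := by
          rw [Finset.mul_sum, Finset.mul_sum, ← Finset.sum_sub_distrib]
          apply Finset.sum_congr rfl
          intro s _
          rw [key s]
          ring
      _ = g t - g (t + 1) := by rw [← hstep, hgdef]
  -- main computation
  symm
  calc (1 / (1 - γ)) *
      ∑ s, ∑ a, visitation γ P π s₀ s * π a s *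
        (((r s a + γ * ∑ s', P s a s' * V' s') - V' s - lam * Real.log (π' a s))
          + lam * Real.log (π' a s / π a s))
      = (1 / (1 - γ)) * ∑ s, visitation γ P π s₀ s * f s := by
        congr 1
        apply Finset.sum_congr rfl
        intro s _
        simp only [hfdef, Finset.mul_sum]
        apply Finset.sum_congr rfl
        intro a _
        ring
    _ = (1 / (1 - γ)) * ((1 - γ) * ∑ s, ∑' t : ℕ, γ ^ t * (K ^ t) s₀ s * f s) := by
        congr 1
        rw [Finset.mul_sum]
        apply Finset.sum_congr rfl
        intro s _
        rw [visitation, ← hKdef, mul_assoc, ← tsum_mul_right]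
    _ = ∑ s, ∑' t : ℕ, γ ^ t * (K ^ t) s₀ s * f s := by
        rw [← mul_assoc, one_div, inv_mul_cancel₀ hγ1', one_mul]
    _ = ∑' t : ℕ, ∑ s, γ ^ t * (K ^ t) s₀ s * f s :=
        (Summable.tsum_finsetSum fun s _ => hsumc (f s) s).symm
    _ = ∑' t : ℕ, (g t - g (t + 1)) := by
        apply tsum_congr
        intro t
        exact hGt t
    _ = (∑' t, g t) - ∑' t, g (t + 1) := Summable.tsum_sub hg hg1
    _ = g 0 := by
        have := Summable.tsum_eq_zero_add hg
        rw [this]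
        ring
    _ = V s₀ - V' s₀ := by
        simp [hgdef, hwdef, Matrix.one_apply]
end

section
/- Suppose for every u ≠ 0 there is s ∈ supp(μ) with Var_{a∼Unif(A)}(⟨φ_{s,a}, u⟩) > 0 (i.e., F(μ) is positive definite). If a policy π satisfies π(a|s) ≥ p > 0 for all a ∈ A and s ∈ supp(μ), then for every unit vector u, ∑_s μ(s) Var_{a∼π(·|s)}(⟨φ_{s,a}, u⟩) > 0; consequently the Fisher information matrix G^π(μ) = ∑_s d(s) E_{a∼π(·|s)}[(φ_{s,a} - E_{a'∼π}φ_{s,a'})(φ_{s,a} - E_{a'∼π}φ_{s,a'})ᵀ] with d(s) ≥ (1-γ)μ(s) is positive definite. -/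
open scoped BigOperators

/-- Variance of `a ↦ ⟨φ_{s,a}, u⟩` under a distribution `q` on actions. -/
noncomputable def varIP {A : Type*} [Fintype A] {d : ℕ}
    (q : A → ℝ) (ψ : A → Fin d → ℝ) (u : Fin d → ℝ) : ℝ :=
  ∑ a, q a * ((∑ i, ψ a i * u i) - ∑ a', q a' * ∑ i, ψ a' i * u i) ^ 2

lemma varIP_nonneg {A : Type*} [Fintype A] {d : ℕ}
    (q : A → ℝ) (hq : ∀ a, 0 ≤ q a) (ψ : A → Fin d → ℝ) (u : Fin d → ℝ) :
    0 ≤ varIP q ψ u :=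
  Finset.sum_nonneg fun a _ => mul_nonneg (hq a) (sq_nonneg _)

/-- If the function is constant, variance is zero (for q summing to 1). -/
lemma varIP_nonconst {A : Type*} [Fintype A] {d : ℕ}
    {q : A → ℝ} (hqsum : ∑ a, q a = 1) {ψ : A → Fin d → ℝ} {u : Fin d → ℝ}
    (h : 0 < varIP q ψ u) :
    ∃ a b : A, (∑ i, ψ a i * u i) ≠ (∑ i, ψ b i * u i) := by
  by_contra hc
  push_neg at hc
  have hconst : ∀ a b : A, (∑ i, ψ a i * u i) = (∑ i, ψ b i * u i) := hc
  have : varIP q ψ u = 0 := by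
    unfold varIP
    apply Finset.sum_eq_zero
    intro a _
    have hm : (∑ a', q a' * ∑ i, ψ a' i * u i) = ∑ i, ψ a i * u i := by
      calc (∑ a', q a' * ∑ i, ψ a' i * u i) = ∑ a', q a' * ∑ i, ψ a i * u i := by
            apply Finset.sum_congr rfl; intro b _; rw [hconst b a]
        _ = (∑ a', q a') * ∑ i, ψ a i * u i := by rw [Finset.sum_mul]
        _ = ∑ i, ψ a i * u i := by rw [hqsum, one_mul]
    rw [hm, sub_self]
    ring
  linarith

/-- If the function is nonconstant and q is bounded below by p > 0, variance is positive. -/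
lemma varIP_pos {A : Type*} [Fintype A] {d : ℕ}
    {q : A → ℝ} {p : ℝ} (hp : 0 < p) (hq : ∀ a, p ≤ q a)
    {ψ : A → Fin d → ℝ} {u : Fin d → ℝ}
    (h : ∃ a b : A, (∑ i, ψ a i * u i) ≠ (∑ i, ψ b i * u i)) :
    0 < varIP q ψ u := by
  obtain ⟨a, b, hab⟩ := h
  set m := ∑ a', q a' * ∑ i, ψ a' i * u i with hm
  have hq0 : ∀ a, 0 ≤ q a := fun a => le_trans hp.le (hq a)
  have key : (∑ i, ψ a i * u i) ≠ m ∨ (∑ i, ψ b i * u i) ≠ m := by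
    by_contra hcon
    push_neg at hcon
    exact hab (hcon.1.trans hcon.2.symm)
  obtain ⟨c, hcm⟩ : ∃ c, (∑ i, ψ c i * u i) ≠ m := by
    rcases key with h1 | h1
    exacts [⟨a, h1⟩, ⟨b, h1⟩]
  apply Finset.sum_pos'
  · intro x _; exact mul_nonneg (hq0 x) (sq_nonneg _)
  · refine ⟨c, Finset.mem_univ c, ?_⟩
    apply mul_pos (lt_of_lt_of_le hp (hq c))
    exact pow_two_pos_of_ne_zero (sub_ne_zero.mpr hcm)

/-- If `F(μ)` is positive definite (for every `u ≠ 0` some state in the support of `μ` has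
positive uniform-action variance of `⟨φ_{s,a}, u⟩`) and `π(a|s) ≥ p > 0` on `supp(μ)`,
then the `μ`-weighted policy variance is positive for every `u ≠ 0`, and consequently the
Fisher information quadratic form (with state weights `d(s) ≥ (1-γ)μ(s)`) is positive
definite. -/
theorem fisher_information_pos_def {S A : Type*} [Fintype S] [Fintype A] [Nonempty A]
    {dm : ℕ} (γ : ℝ) (hγ : 0 < γ) (hγ1 : γ < 1)
    (μ : S → ℝ) (hμ : ∀ s, 0 ≤ μ s) (hμsum : ∑ s, μ s = 1)
    (φ : S → A → Fin dm → ℝ)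
    (hF : ∀ u : Fin dm → ℝ, u ≠ 0 →
      ∃ s, 0 < μ s ∧ 0 < varIP (fun _ => (Fintype.card A : ℝ)⁻¹) (φ s) u)
    (π : A → S → ℝ) (hπ : ∀ a s, 0 ≤ π a s) (hπsum : ∀ s, ∑ a, π a s = 1)
    (p : ℝ) (hp : 0 < p) (hπp : ∀ s, 0 < μ s → ∀ a, p ≤ π a s)
    (d : S → ℝ) (hd : ∀ s, (1 - γ) * μ s ≤ d s) :
    (∀ u : Fin dm → ℝ, u ≠ 0 → 0 < ∑ s, μ s * varIP (fun a => π a s) (φ s) u) ∧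
    (∀ u : Fin dm → ℝ, u ≠ 0 → 0 < ∑ s, d s * varIP (fun a => π a s) (φ s) u) := by
  have hvarpos : ∀ u : Fin dm → ℝ, u ≠ 0 →
      ∃ s, 0 < μ s ∧ 0 < varIP (fun a => π a s) (φ s) u := by
    intro u hu
    obtain ⟨s, hμs, hvar⟩ := hF u hu
    have hunif : ∑ a : A, (Fintype.card A : ℝ)⁻¹ = 1 := by
      rw [Finset.sum_const, Finset.card_univ, nsmul_eq_mul]
      field_simp
    have hnc := varIP_nonconst hunif hvar
    exact ⟨s, hμs, varIP_pos hp (hπp s hμs) hnc⟩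
  have hvnonneg : ∀ s, 0 ≤ varIP (fun a => π a s) (φ s) := by
    intro s u
    exact varIP_nonneg _ (fun a => hπ a s) _ _
  constructor
  · intro u hu
    obtain ⟨s, hμs, hvar⟩ := hvarpos u hu
    apply Finset.sum_pos'
    · intro x _; exact mul_nonneg (hμ x) (hvnonneg x u)
    · exact ⟨s, Finset.mem_univ s, mul_pos hμs hvar⟩
  · intro u hu
    obtain ⟨s, hμs, hvar⟩ := hvarpos u hu
    have hds : 0 < d s := lt_of_lt_of_le (by nlinarith) (hd s)
    apply Finset.sum_pos'
    · intro x _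
      exact mul_nonneg (le_trans (by nlinarith [hμ x]) (hd x)) (hvnonneg x u)
    · exact ⟨s, Finset.mem_univ s, mul_pos hds hvar⟩
end
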